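/- arXiv:1511.07823 — 5 statements merged into one kernel-verified Lean document; each statement's English description precedes it below -/
import Mathlib

section
/- Let X be a complex Banach space, θ ∈ (π/2, π), and A : X → X a bounded linear operator such that for some C ≥ 0, for every λ ∈ Σ_θ the operator λI − A is invertible and ‖λ(λI − A)^{-1}‖ ≤ C. Then there exists a constant K, depending only on C and θ, such that for every τ > 0 the operator I − τA is invertible and for every integer n ≥ 1 one has ‖A (I − τA)^{-n}‖ ≤ K/(nτ). -/
/-!
The sector contains the right half-plane, and a resolvent bound there is invariant under
`a ↦ τ • a`, so it suffices to show `‖a Tⁿ‖ = O(1/n)` for `T = (1 - a)⁻¹`. Put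
`R z = (1 - z - a)⁻¹`, holomorphic for `re z < 1`. The resolvent identity `R z = T + z T R z`
makes `T^(n+1)` the `n`-th Taylor coefficient of `R` at `0`, so
`∮_{|z|=ρ} z^(-n-1) a R z = 2πi a T^(n+1)`. Two integrations by parts (`R' = R²`,
`(R²)' = 2R³`) turn this into `∮ z^(1-n) a (R z)³ = (n choose 2) 2πi a T^(n+1)`, and
`a (R z)³ = (1 - z) (R z)³ - (R z)²` gives `‖a (R z)³‖ ≤ (C + 1) C² / |1 - z|²`. As
`∫₀^{2π} |1 - ρe^{it}|⁻² dt = 2π / (1 - ρ²)`, the radius `ρ = 1 - 1/(2(n-1))`, for which Bernoulli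
gives `ρ^(n-2) ≥ 1/2`, bounds the integral by `O(n)`.
-/

open Complex Metric Set
open scoped Real ComplexConjugate

section Resolvent

variable {E : Type*} [Ring E] [Algebra ℂ E] {a : E} {w w' : ℂ}

theorem mul_resolvent_eq_smul_sub_one (hw : w ∈ resolventSet ℂ a) :
    a * resolvent a w = w • resolvent a w - 1 := by
  have h : (algebraMap ℂ E w - a) * resolvent a w = 1 :=
    Ring.mul_inverse_cancel _ (spectrum.mem_resolventSet_iff.mp hw)
  rw [sub_mul, Algebra.algebraMap_eq_smul_one, smul_one_mul] at h
  rw [← h, sub_sub_cancel]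

theorem resolvent_sub_resolvent_eq_smul_mul (hw : w ∈ resolventSet ℂ a)
    (hw' : w' ∈ resolventSet ℂ a) :
    resolvent a w' - resolvent a w = (w - w') • (resolvent a w * resolvent a w') := by
  have h : resolvent a w * (algebraMap ℂ E w - a) = 1 :=
    Ring.inverse_mul_cancel _ (spectrum.mem_resolventSet_iff.mp hw)
  have h' : (algebraMap ℂ E w' - a) * resolvent a w' = 1 :=
    Ring.mul_inverse_cancel _ (spectrum.mem_resolventSet_iff.mp hw')
  calc resolvent a w' - resolvent a w
      = resolvent a w * ((algebraMap ℂ E w - a) - (algebraMap ℂ E w' - a)) * resolvent a w' := by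
        rw [mul_sub, sub_mul, h, one_mul, mul_assoc, h', mul_one]
    _ = (w - w') • (resolvent a w * resolvent a w') := by
        rw [sub_sub_sub_cancel_right, ← map_sub, Algebra.algebraMap_eq_smul_one, mul_smul_one,
          smul_mul_assoc]

end Resolvent

theorem one_sub_ne_zero_of_norm_lt_one {z : ℂ} (hz : ‖z‖ < 1) : 1 - z ≠ 0 :=
  sub_ne_zero.mpr fun h => by simp [← h] at hz

theorem re_one_sub_pos_of_mem_closedBall {ρ : ℝ} (hρ : ρ < 1) {z : ℂ}
    (hz : z ∈ closedBall (0 : ℂ) ρ) : 0 < (1 - z).re := by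
  rw [mem_closedBall_zero_iff] at hz
  have := re_le_norm z
  rw [sub_re, one_re]
  linarith

theorem circleIntegral_zpow_smul_deriv {F : Type*} [NormedAddCommGroup F]
    [NormedSpace ℂ F] [CompleteSpace F] {G G' : ℂ → F} {R : ℝ} (hR : 0 < R) (m : ℤ)
    (hG : ∀ z ∈ sphere (0 : ℂ) R, HasDerivAt G (G' z) z) (hG' : ContinuousOn G' (sphere 0 R)) :
    ∮ z in C(0, R), z ^ m • G' z = -((m : ℂ) • ∮ z in C(0, R), z ^ (m - 1) • G z) := by
  have hz0 : ∀ z ∈ sphere (0 : ℂ) R, z ≠ 0 := fun z hz => ne_zero_of_mem_sphere hR.ne' ⟨z, hz⟩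
  have hGc : ContinuousOn G (sphere 0 R) := fun z hz => (hG z hz).continuousAt.continuousWithinAt
  have hzpow (k : ℤ) : ContinuousOn (fun z : ℂ => z ^ k) (sphere 0 R) :=
    continuousOn_id.zpow₀ k fun z hz => Or.inl (hz0 z hz)
  have hsum : ∮ z in C(0, R), (z ^ m • G' z + (m : ℂ) • z ^ (m - 1) • G z) = 0 := by
    refine circleIntegral.integral_eq_zero_of_hasDerivWithinAt (f := fun z => z ^ m • G z) hR.le
      fun z hz => ?_
    refine (((hasDerivAt_zpow m z (Or.inl (hz0 z hz))).smul (hG z hz)).congr_deriv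
      ?_).hasDerivWithinAt
    rw [smul_smul]
  have h1 : CircleIntegrable (fun z => z ^ m • G' z) 0 R :=
    ((hzpow m).smul hG').circleIntegrable hR.le
  have h2 : CircleIntegrable (fun z => (m : ℂ) • z ^ (m - 1) • G z) 0 R :=
    (((hzpow (m - 1)).smul hGc).const_smul _).circleIntegrable hR.le
  rw [circleIntegral.integral_add h1 h2, circleIntegral.integral_smul] at hsum
  exact eq_neg_of_add_eq_zero_left hsum

theorem integral_inv_norm_one_sub_circleMap_sq {ρ : ℝ} (hρ0 : 0 < ρ) (hρ1 : ρ < 1) :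
    ∫ t in (0 : ℝ)..2 * π, (‖1 - circleMap 0 ρ t‖ ^ 2)⁻¹ = 2 * π / (1 - ρ ^ 2) := by
  have hball : ((ρ : ℂ) ^ 2) ∈ ball (0 : ℂ) ρ := by
    rw [mem_ball_zero_iff, norm_pow, norm_real, Real.norm_of_nonneg hρ0.le]; nlinarith
  have hd : DifferentiableOn ℂ (fun z : ℂ => (1 - z)⁻¹) (closedBall 0 ρ) := fun z hz =>
    ((differentiableAt_id.const_sub 1).inv (one_sub_ne_zero_of_norm_lt_one
      ((mem_closedBall_zero_iff.mp hz).trans_lt hρ1))).differentiableWithinAt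
  have hcauchy := hd.circleIntegral_sub_inv_smul hball
  -- On `|z| = ρ`, `ρ² = z z̄`, so `dz / ((z - ρ²)(1 - z)) = i dt / |1 - z|²`.
  have hkernel (t : ℝ) : deriv (circleMap 0 ρ) t •
      ((circleMap 0 ρ t - (ρ : ℂ) ^ 2)⁻¹ • (1 - circleMap 0 ρ t)⁻¹) =
      I * (((‖1 - circleMap 0 ρ t‖ ^ 2)⁻¹ : ℝ) : ℂ) := by
    set z := circleMap 0 ρ t
    have hnorm : ‖z‖ = ρ := by rw [norm_circleMap_zero, abs_of_pos hρ0]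
    have hz0 : z ≠ 0 := norm_pos_iff.mp (hnorm ▸ hρ0)
    have h1z : 1 - z ≠ 0 := one_sub_ne_zero_of_norm_lt_one (hnorm ▸ hρ1)
    have h1z' : 1 - conj z ≠ 0 := by
      rw [← map_one (starRingEnd ℂ), ← map_sub]; exact (map_ne_zero _).mpr h1z
    have hρz : (ρ : ℂ) ^ 2 = z * conj z := by
      rw [mul_conj, normSq_eq_norm_sq, hnorm]; push_cast; ring
    have hsq : ((‖1 - z‖ ^ 2 : ℝ) : ℂ) = (1 - z) * (1 - conj z) := by
      rw [← normSq_eq_norm_sq, ← mul_conj, map_sub, map_one]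
    rw [deriv_circleMap, smul_eq_mul, smul_eq_mul, ofReal_inv, hsq, hρz]
    field_simp
    ring
  rw [circleIntegral] at hcauchy
  simp_rw [hkernel, intervalIntegral.integral_const_mul, intervalIntegral.integral_ofReal]
    at hcauchy
  apply ofReal_injective
  apply mul_left_cancel₀ I_ne_zero
  rw [hcauchy]
  push_cast
  ring

theorem norm_circleIntegral_le_of_norm_le_div_norm_one_sub_sq {F : Type*} [NormedAddCommGroup F]
    [NormedSpace ℂ F] {f : ℂ → F} {ρ M : ℝ} (hρ0 : 0 < ρ) (hρ1 : ρ < 1)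
    (hf : ∀ z ∈ sphere (0 : ℂ) ρ, ‖f z‖ ≤ M / ‖1 - z‖ ^ 2) :
    ‖∮ z in C(0, ρ), f z‖ ≤ 2 * π * ρ * M / (1 - ρ ^ 2) := by
  have hne (t : ℝ) : ‖1 - circleMap 0 ρ t‖ ^ 2 ≠ 0 := by
    refine pow_ne_zero _ (norm_ne_zero_iff.mpr (one_sub_ne_zero_of_norm_lt_one ?_))
    rwa [norm_circleMap_zero, abs_of_pos hρ0]
  have hint : IntervalIntegrable (fun t => ρ * M * (‖1 - circleMap 0 ρ t‖ ^ 2)⁻¹)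
      MeasureTheory.volume 0 (2 * π) :=
    (continuous_const.mul (((continuous_const.sub (continuous_circleMap 0 ρ)).norm.pow 2).inv₀
      hne)).intervalIntegrable _ _
  calc ‖∮ z in C(0, ρ), f z‖
      ≤ ∫ t in (0 : ℝ)..2 * π, ρ * M * (‖1 - circleMap 0 ρ t‖ ^ 2)⁻¹ := by
        refine intervalIntegral.norm_integral_le_of_norm_le Real.two_pi_pos.le
          (MeasureTheory.ae_of_all _ fun t _ => ?_) hint
        rw [norm_smul, deriv_circleMap, norm_mul, norm_circleMap_zero, norm_I, mul_one,
          abs_of_pos hρ0, mul_assoc, ← div_eq_mul_inv]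
        exact mul_le_mul_of_nonneg_left (hf _ (circleMap_mem_sphere 0 hρ0.le t)) hρ0.le
    _ = 2 * π * ρ * M / (1 - ρ ^ 2) := by
        rw [intervalIntegral.integral_const_mul, integral_inv_norm_one_sub_circleMap_sq hρ0 hρ1]
        ring

section BanachAlgebra

variable {E : Type*} [NormedRing E] [NormedAlgebra ℂ E]

theorem hasDerivAt_resolvent_one_sub [CompleteSpace E] {a : E} {z : ℂ}
    (hz : 1 - z ∈ resolventSet ℂ a) :
    HasDerivAt (fun z => resolvent a (1 - z)) (resolvent a (1 - z) ^ 2) z := by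
  simpa [Function.comp_def] using
    (spectrum.hasDerivAt_resolvent_const_left hz).scomp z ((hasDerivAt_id z).const_sub 1)

def HasRightHalfPlaneResolventBound (a : E) (C : ℝ) : Prop :=
  ∀ w : ℂ, 0 < w.re → w ∈ resolventSet ℂ a ∧ ‖w • resolvent a w‖ ≤ C

namespace HasRightHalfPlaneResolventBound

variable {a : E} {C ρ : ℝ} {w : ℂ}

theorem of_sector {θ : ℝ} (hθ : π / 2 < θ)
    (h : ∀ lam : ℂ, lam ≠ 0 → |arg lam| < θ →
      ∃ B : E, (lam • (1 : E) - a) * B = 1 ∧ B * (lam • (1 : E) - a) = 1 ∧ ‖lam • B‖ ≤ C) :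
    HasRightHalfPlaneResolventBound a C := by
  intro w hw
  have hw0 : w ≠ 0 := by rintro rfl; simp at hw
  obtain ⟨B, hB, hB', hC⟩ :=
    h w hw0 ((abs_arg_lt_pi_div_two_iff.mpr (Or.inl hw)).trans hθ)
  rw [← Algebra.algebraMap_eq_smul_one] at hB hB'
  have hres : resolvent a w = B := by
    have hu : algebraMap ℂ E w - a = ((⟨_, B, hB, hB'⟩ : Eˣ) : E) := rfl
    rw [resolvent, hu, Ring.inverse_unit]
    rfl
  exact ⟨spectrum.mem_resolventSet_of_left_right_inverse hB hB', hres ▸ hC⟩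

variable (ha : HasRightHalfPlaneResolventBound a C)
include ha

theorem nonneg : 0 ≤ C := (norm_nonneg _).trans (ha 1 (by simp)).2

theorem norm_resolvent_le (hw : 0 < w.re) : ‖resolvent a w‖ ≤ C / ‖w‖ := by
  have hw0 : 0 < ‖w‖ := norm_pos_iff.mpr (by rintro rfl; simp at hw)
  rw [le_div_iff₀ hw0, mul_comm, ← norm_smul]
  exact (ha w hw).2

theorem norm_mul_resolvent_pow_three_le (hw : 0 < w.re) :
    ‖a * resolvent a w ^ 3‖ ≤ (C + 1) * C ^ 2 / ‖w‖ ^ 2 := by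
  set R := resolvent a w
  have hR : ‖R‖ ≤ C / ‖w‖ := ha.norm_resolvent_le hw
  have hR2 : ‖R ^ 2‖ ≤ (C / ‖w‖) ^ 2 := (norm_pow_le' R two_pos).trans (by gcongr)
  have hexp : a * R ^ 3 = (w • R) * R ^ 2 - R ^ 2 := by
    rw [pow_succ', ← mul_assoc, mul_resolvent_eq_smul_sub_one (ha w hw).1, sub_mul, one_mul]
  calc ‖a * R ^ 3‖ ≤ ‖w • R‖ * ‖R ^ 2‖ + ‖R ^ 2‖ := by
        rw [hexp]; exact (norm_sub_le _ _).trans (by gcongr; exact norm_mul_le _ _)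
    _ ≤ C * (C / ‖w‖) ^ 2 + (C / ‖w‖) ^ 2 := by
        gcongr
        · exact ha.nonneg
        · exact (ha w hw).2
    _ = (C + 1) * C ^ 2 / ‖w‖ ^ 2 := by ring

theorem smul {τ : ℝ} (hτ : 0 < τ) : HasRightHalfPlaneResolventBound ((τ : ℂ) • a) C := by
  intro w hw
  have hτ' : (τ : ℂ) ≠ 0 := by exact_mod_cast hτ.ne'
  have hwτ : 0 < (w / τ).re := by rw [div_ofReal_re]; positivity
  have hscale : resolvent ((τ : ℂ) • a) w = (τ : ℂ)⁻¹ • resolvent a (w / τ) := by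
    have := spectrum.units_smul_resolvent (r := (Units.mk0 (τ : ℂ) hτ')⁻¹) (s := w / τ) (a := a)
    simp only [Units.smul_def, inv_inv, Units.val_inv_eq_inv_val, Units.val_mk0, smul_eq_mul,
      mul_div_cancel₀ _ hτ'] at this
    exact this.symm
  refine ⟨spectrum.isUnit_resolvent.mpr ?_, ?_⟩
  · rw [hscale]
    exact (spectrum.isUnit_resolvent.mp (ha _ hwτ).1).smul (Units.mk0 (τ : ℂ)⁻¹ (inv_ne_zero hτ'))
  · rw [hscale, smul_smul, ← div_eq_mul_inv]
    exact (ha _ hwτ).2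

-- `resolvent a 1` without the ascription would elaborate with `1 : ℕ`.
theorem resolvent_one_sub_eq {z : ℂ} (hz : 0 < (1 - z).re) :
    resolvent a (1 - z) =
      resolvent a (1 : ℂ) + z • (resolvent a (1 : ℂ) * resolvent a (1 - z)) := by
  have h := resolvent_sub_resolvent_eq_smul_mul (ha 1 (by simp)).1 (ha _ hz).1
  rw [sub_sub_cancel] at h
  exact eq_add_of_sub_eq' h

theorem mem_resolventSet_one_sub (hρ : ρ < 1) {z : ℂ} (hz : z ∈ closedBall (0 : ℂ) ρ) :
    1 - z ∈ resolventSet ℂ a :=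
  (ha _ (re_one_sub_pos_of_mem_closedBall hρ hz)).1

theorem isUnit_one_sub_smul {τ : ℝ} (hτ : 0 < τ) : IsUnit (1 - (τ : ℂ) • a) := by
  simpa using spectrum.mem_resolventSet_iff.mp ((ha.smul hτ) 1 (by simp)).1

variable [CompleteSpace E]

theorem circleIntegral_zpow_smul_mul_resolvent (hρ0 : 0 < ρ) (hρ1 : ρ < 1) (n : ℕ) (d : E) :
    ∮ z in C(0, ρ), z ^ (-(n + 1 : ℤ)) • (d * resolvent a (1 - z)) =
      (2 * π * I : ℂ) • (d * resolvent a (1 : ℂ) ^ (n + 1)) := by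
  have hz0 (z : ℂ) (hz : z ∈ sphere (0 : ℂ) ρ) : z ≠ 0 := ne_zero_of_mem_sphere hρ0.ne' ⟨z, hz⟩
  have hR : ContinuousOn (fun z : ℂ => resolvent a (1 - z)) (sphere 0 ρ) := fun z hz =>
    (hasDerivAt_resolvent_one_sub (ha.mem_resolventSet_one_sub hρ1
      (sphere_subset_closedBall hz))).continuousAt.continuousWithinAt
  induction n generalizing d with
  | zero =>
    have hd : DifferentiableOn ℂ (fun z : ℂ => d * resolvent a (1 - z)) (closedBall 0 ρ) :=
      fun z hz => ((hasDerivAt_resolvent_one_sub (ha.mem_resolventSet_one_sub hρ1 hz)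
        ).differentiableAt.const_mul d).differentiableWithinAt
    simpa using hd.circleIntegral_sub_inv_smul (mem_ball_self hρ0)
  | succ n ih =>
    set T := resolvent a (1 : ℂ)
    have hsplit : EqOn (fun z : ℂ => z ^ (-((n + 1 : ℕ) + 1 : ℤ)) • (d * resolvent a (1 - z)))
        (fun z : ℂ => (z - 0) ^ (-(n + 2 : ℤ)) • (d * T) +
          z ^ (-(n + 1 : ℤ)) • ((d * T) * resolvent a (1 - z))) (sphere 0 ρ) := by
      intro z hz
      have hexp : z ^ (-(n + 2 : ℤ)) * z = z ^ (-(n + 1 : ℤ)) := by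
        rw [← zpow_add_one₀ (hz0 z hz)]; ring_nf
      simp only [sub_zero]
      rw [show -(((n + 1 : ℕ) : ℤ) + 1) = -(n + 2 : ℤ) by push_cast; ring]
      conv_lhs => rw [ha.resolvent_one_sub_eq (re_one_sub_pos_of_mem_closedBall hρ1
        (sphere_subset_closedBall hz))]
      rw [mul_add, smul_add, mul_smul_comm, smul_smul, hexp, mul_assoc]
    have hpow : CircleIntegrable (fun z : ℂ => (z - 0) ^ (-(n + 2 : ℤ)) • (d * T)) 0 ρ :=
      (((continuousOn_id.sub continuousOn_const).zpow₀ _ fun z hz =>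
        Or.inl (by simpa using hz0 z hz)).smul continuousOn_const).circleIntegrable hρ0.le
    have hrest : CircleIntegrable
        (fun z : ℂ => z ^ (-(n + 1 : ℤ)) • ((d * T) * resolvent a (1 - z))) 0 ρ :=
      ((continuousOn_id.zpow₀ _ fun z hz => Or.inl (hz0 z hz)).smul
        (continuousOn_const.mul hR)).circleIntegrable hρ0.le
    rw [circleIntegral.integral_congr hρ0.le hsplit, circleIntegral.integral_add hpow hrest,
      circleIntegral.integral_smul_const, circleIntegral.integral_sub_zpow_of_ne (by omega),
      ih, zero_smul, zero_add, mul_assoc d, ← pow_succ']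

theorem circleIntegral_zpow_smul_mul_resolvent_pow_three (hρ0 : 0 < ρ) (hρ1 : ρ < 1) (n : ℕ)
    (d : E) :
    ∮ z in C(0, ρ), z ^ (1 - n : ℤ) • (d * resolvent a (1 - z) ^ 3) =
      ((n * (n - 1) / 2 : ℂ) * (2 * π * I)) • (d * resolvent a (1 : ℂ) ^ (n + 1)) := by
  have hR (z : ℂ) (hz : z ∈ sphere (0 : ℂ) ρ) :=
    hasDerivAt_resolvent_one_sub (ha.mem_resolventSet_one_sub hρ1 (sphere_subset_closedBall hz))
  have hRc : ContinuousOn (fun z : ℂ => resolvent a (1 - z)) (sphere 0 ρ) := fun z hz =>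
    (hR z hz).continuousAt.continuousWithinAt
  have hR2 (z : ℂ) (hz : z ∈ sphere (0 : ℂ) ρ) : HasDerivAt (fun z => resolvent a (1 - z) ^ 2)
      ((2 : ℂ) • resolvent a (1 - z) ^ 3) z := by
    convert (hR z hz).mul (hR z hz) using 1
    · ext z; exact sq _
    · rw [two_smul, ← pow_succ, ← pow_succ']
  have e1 := circleIntegral_zpow_smul_deriv hρ0 (-n)
    (G := fun z => d * resolvent a (1 - z)) (fun z hz => (hR z hz).const_mul d)
    (continuousOn_const.mul (hRc.pow 2))
  have e2 := circleIntegral_zpow_smul_deriv hρ0 (1 - n)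
    (G := fun z => d * resolvent a (1 - z) ^ 2) (fun z hz => (hR2 z hz).const_mul d)
    (continuousOn_const.mul ((hRc.pow 3).const_smul _))
  simp only [mul_smul_comm, smul_comm (_ ^ (1 - n : ℤ) : ℂ) (2 : ℂ)] at e2
  rw [circleIntegral.integral_smul] at e2
  rw [show (1 - n : ℤ) - 1 = -n by ring, e1, show -(n : ℤ) - 1 = -(n + 1 : ℤ) by ring,
    ha.circleIntegral_zpow_smul_mul_resolvent hρ0 hρ1] at e2
  push_cast at e2
  linear_combination (norm := module) (1 / 2 : ℂ) • e2

theorem norm_mul_resolvent_one_pow_add_three_le (hρ0 : 0 < ρ) (hρ1 : ρ < 1) (k : ℕ) :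
    ‖a * resolvent a (1 : ℂ) ^ (k + 3)‖ ≤
      2 * (C + 1) * C ^ 2 / ((k + 2) * (k + 1) * ρ ^ k * (1 - ρ ^ 2)) := by
  have hM : ∀ z ∈ sphere (0 : ℂ) ρ, ‖z ^ (1 - (k + 2 : ℕ) : ℤ) • (a * resolvent a (1 - z) ^ 3)‖ ≤
      (ρ ^ (k + 1))⁻¹ * ((C + 1) * C ^ 2) / ‖1 - z‖ ^ 2 := by
    intro z hz
    rw [mem_sphere_zero_iff_norm] at hz
    rw [norm_smul, norm_zpow, hz, show (1 - (k + 2 : ℕ) : ℤ) = -(k + 1 : ℕ) by push_cast; ring,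
      zpow_neg, zpow_natCast, mul_div_assoc]
    gcongr
    exact ha.norm_mul_resolvent_pow_three_le
      (re_one_sub_pos_of_mem_closedBall hρ1 (mem_closedBall_zero_iff.mpr hz.le))
  have h := norm_circleIntegral_le_of_norm_le_div_norm_one_sub_sq hρ0 hρ1 hM
  rw [ha.circleIntegral_zpow_smul_mul_resolvent_pow_three hρ0 hρ1, norm_smul] at h
  have hscalar : ‖((k + 2 : ℕ) * ((k + 2 : ℕ) - 1) / 2 * (2 * π * I) : ℂ)‖ =
      (k + 2) * (k + 1) * π := by
    rw [show ((k + 2 : ℕ) * ((k + 2 : ℕ) - 1) / 2 * (2 * π * I) : ℂ) =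
      (((k + 2) * (k + 1) * π : ℝ) : ℂ) * I by push_cast; ring, norm_mul, norm_I, mul_one,
      norm_real, Real.norm_of_nonneg (by positivity)]
  rw [hscalar] at h
  have h1ρ : 0 < 1 - ρ ^ 2 := by nlinarith
  rw [le_div_iff₀ (by positivity)]
  calc ‖a * resolvent a (1 : ℂ) ^ (k + 3)‖ * ((k + 2) * (k + 1) * ρ ^ k * (1 - ρ ^ 2))
      = (k + 2) * (k + 1) * π * ‖a * resolvent a (1 : ℂ) ^ (k + 2 + 1)‖ *
          (ρ ^ k * (1 - ρ ^ 2)) / π := by field_simp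
    _ ≤ 2 * π * ρ * ((ρ ^ (k + 1))⁻¹ * ((C + 1) * C ^ 2)) / (1 - ρ ^ 2) *
          (ρ ^ k * (1 - ρ ^ 2)) / π := by gcongr
    _ = 2 * (C + 1) * C ^ 2 := by field_simp; ring

theorem norm_mul_resolvent_one_pow_add_three_le_div (k : ℕ) :
    ‖a * resolvent a (1 : ℂ) ^ (k + 3)‖ ≤ 12 * (C + 1) ^ 3 / (k + 3) := by
  set ρ : ℝ := 1 - 1 / (2 * (k + 1))
  have hε : 1 / (2 * (k + 1)) ≤ (1 / 2 : ℝ) := by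
    rw [div_le_div_iff₀ (by positivity) two_pos]; linarith [(k.cast_nonneg : (0 : ℝ) ≤ k)]
  have hρ0 : 0 < ρ := by linarith
  have hρ1 : ρ < 1 := by simp only [ρ]; linarith [show 0 < 1 / (2 * ((k : ℝ) + 1)) by positivity]
  have hρk : 1 / 2 ≤ ρ ^ k := by
    have hb := one_add_mul_le_pow (a := -(1 / (2 * (k + 1)) : ℝ)) (by linarith) k
    have : (k : ℝ) * (1 / (2 * (k + 1))) ≤ 1 / 2 := by
      rw [mul_one_div, div_le_div_iff₀ (by positivity) two_pos]; linarith
    simp only [ρ, sub_eq_add_neg]; nlinarith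
  have hρ2 : 1 / (2 * (k + 1)) ≤ 1 - ρ ^ 2 := by simp only [ρ]; nlinarith
  have hden : ((k : ℝ) + 2) / 4 ≤ (k + 2) * (k + 1) * ρ ^ k * (1 - ρ ^ 2) := by
    calc ((k : ℝ) + 2) / 4 = (k + 2) * (k + 1) * (1 / 2) * (1 / (2 * (k + 1))) := by
          field_simp; ring
      _ ≤ (k + 2) * (k + 1) * ρ ^ k * (1 - ρ ^ 2) := by gcongr
  have hC := ha.nonneg
  calc ‖a * resolvent a (1 : ℂ) ^ (k + 3)‖
      ≤ 2 * (C + 1) * C ^ 2 / ((k + 2) * (k + 1) * ρ ^ k * (1 - ρ ^ 2)) :=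
        ha.norm_mul_resolvent_one_pow_add_three_le hρ0 hρ1 k
    _ ≤ 2 * (C + 1) * C ^ 2 / ((k + 2) / 4) := by gcongr
    _ ≤ 12 * (C + 1) ^ 3 / (k + 3) := by
        rw [div_le_div_iff₀ (by positivity) (by positivity)]
        have hC3 : (C + 1) * C ^ 2 ≤ (C + 1) ^ 3 := by
          rw [pow_succ' (C + 1) 2]; gcongr; linarith
        calc 2 * (C + 1) * C ^ 2 * (k + 3) = ((C + 1) * C ^ 2) * (2 * (k + 3)) := by ring
          _ ≤ (C + 1) ^ 3 * (3 * (k + 2)) :=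
            mul_le_mul hC3 (by linarith) (by positivity) (by positivity)
          _ = 12 * (C + 1) ^ 3 * ((k + 2) / 4) := by ring

theorem norm_mul_resolvent_one_pow_le (h1 : ‖(1 : E)‖ ≤ 1) {n : ℕ} (hn : 1 ≤ n) :
    ‖a * resolvent a (1 : ℂ) ^ n‖ ≤ 12 * (C + 1) ^ 3 / n := by
  have hC := ha.nonneg
  have hT : ‖resolvent a (1 : ℂ)‖ ≤ C := by simpa using (ha 1 (by simp)).2
  have haT : ‖a * resolvent a (1 : ℂ)‖ ≤ C + 1 := by
    rw [mul_resolvent_eq_smul_sub_one (ha 1 (by simp)).1, one_smul]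
    exact (norm_sub_le _ _).trans (add_le_add hT h1)
  have hC3 : C + 1 ≤ (C + 1) ^ 3 := le_self_pow₀ (by linarith) (by norm_num)
  obtain ⟨k, rfl⟩ | rfl | rfl : (∃ k, n = k + 3) ∨ n = 1 ∨ n = 2 :=
    (le_or_gt 3 n).imp (fun h => ⟨n - 3, by omega⟩) (by omega)
  · exact_mod_cast ha.norm_mul_resolvent_one_pow_add_three_le_div k
  · simpa using haT.trans (by linarith)
  · calc ‖a * resolvent a (1 : ℂ) ^ 2‖ = ‖(a * resolvent a (1 : ℂ)) * resolvent a (1 : ℂ)‖ := by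
          rw [sq, mul_assoc]
      _ ≤ (C + 1) * C := norm_mul_le_of_le haT hT
      _ ≤ 12 * (C + 1) ^ 3 / (2 : ℕ) := by push_cast; nlinarith

theorem norm_mul_inverse_one_sub_smul_pow_le (h1 : ‖(1 : E)‖ ≤ 1) {τ : ℝ} (hτ : 0 < τ) {n : ℕ}
    (hn : 1 ≤ n) : ‖a * Ring.inverse (1 - (τ : ℂ) • a) ^ n‖ ≤ 12 * (C + 1) ^ 3 / (n * τ) := by
  have h := (ha.smul hτ).norm_mul_resolvent_one_pow_le h1 hn
  rw [resolvent, map_one, smul_mul_assoc, norm_smul, norm_real, Real.norm_of_nonneg hτ.le] at h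
  rw [← div_div, le_div_iff₀ hτ, mul_comm]
  exact h

end HasRightHalfPlaneResolventBound

end BanachAlgebra

theorem backward_euler_kernel_bound_general
    {X : Type*} [NormedAddCommGroup X] [NormedSpace ℂ X] [CompleteSpace X]
    (θ : ℝ) (hθ1 : Real.pi / 2 < θ)
    (A : X →L[ℂ] X) (C : ℝ)
    (hres : ∀ lam : ℂ, lam ≠ 0 → |Complex.arg lam| < θ →
      ∃ B : X →L[ℂ] X, (lam • (1 : X →L[ℂ] X) - A) * B = 1 ∧
        B * (lam • (1 : X →L[ℂ] X) - A) = 1 ∧ ‖lam • B‖ ≤ C) :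
    ∃ K : ℝ, ∀ τ : ℝ, 0 < τ →
      IsUnit (1 - (τ : ℂ) • A) ∧
      ∀ n : ℕ, 1 ≤ n →
        ‖A * (Ring.inverse (1 - (τ : ℂ) • A)) ^ n‖ ≤ K / (n * τ) := by
  have hA := HasRightHalfPlaneResolventBound.of_sector hθ1 hres
  exact ⟨12 * (C + 1) ^ 3, fun τ hτ => ⟨hA.isUnit_one_sub_smul hτ, fun n hn =>
    hA.norm_mul_inverse_one_sub_smul_pow_le ContinuousLinearMap.norm_id_le hτ hn⟩⟩

/-- The convolution quadrature kernel of the backward Euler scheme satisfies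
‖A (I − τA)^{-n}‖ ≤ K/(nτ), given a uniform resolvent bound on a sector of
angle θ > π/2 (Lemma 7.1 of Kovács–Li–Lubich, for the one-step BDF method). -/
theorem backward_euler_kernel_bound
    {X : Type*} [NormedAddCommGroup X] [NormedSpace ℂ X] [CompleteSpace X]
    (θ : ℝ) (hθ1 : Real.pi / 2 < θ) (hθ2 : θ < Real.pi)
    (A : X →L[ℂ] X) (C : ℝ) (hC : 0 ≤ C)
    (hres : ∀ lam : ℂ, lam ≠ 0 → |Complex.arg lam| < θ →
      ∃ B : X →L[ℂ] X, (lam • (1 : X →L[ℂ] X) - A) * B = 1 ∧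
        B * (lam • (1 : X →L[ℂ] X) - A) = 1 ∧ ‖lam • B‖ ≤ C) :
    ∃ K : ℝ, ∀ τ : ℝ, 0 < τ →
      IsUnit (1 - (τ : ℂ) • A) ∧
      ∀ n : ℕ, 1 ≤ n →
        ‖A * (Ring.inverse (1 - (τ : ℂ) • A)) ^ n‖ ≤ K / (n * τ) :=
  backward_euler_kernel_bound_general θ hθ1 A C hres
end

section
/- Let s ≥ 1, let 𝒪 be a complex s×s matrix, b ∈ ℂ^s, 𝟙 = (1,…,1)ᵀ ∈ ℂ^s, and let z, ζ ∈ ℂ with ζ ≠ 1. Assume I − z𝒪 is invertible, set R(z) = 1 + z·bᵀ(I − z𝒪)^{-1}𝟙, and assume R(z)ζ ≠ 1. Let T = 𝒪 + (ζ/(1−ζ))·𝟙bᵀ (where 𝟙bᵀ denotes the rank-one matrix with entries (𝟙bᵀ)_{ij} = b_j). Then I − zT is invertible and (I − zT)^{-1} T = 𝒪(I − z𝒪)^{-1} + (ζ/(1 − R(z)ζ)) · (I − z𝒪)^{-1} 𝟙 bᵀ (I − z𝒪)^{-1}. -/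
/-!
With `A = 1 - z • 𝒪` and `c = ζ / (1 - ζ)`, the matrix `1 - z • T = A - (z * c) • 𝟙bᵀ` is a rank-one
perturbation of `A`. By the matrix determinant lemma its determinant is
`det A * (1 - z * c * bᵀA⁻¹𝟙) = det A * (1 - R(z) ζ) / (1 - ζ) ≠ 0`. The formula is then checked by
multiplying its right-hand side by `1 - z • T`, using that `𝒪` commutes with `A`, that
`z • 𝒪 * A⁻¹ = A⁻¹ - 1`, and that `𝟙bᵀ * A⁻¹ * 𝟙bᵀ = (bᵀA⁻¹𝟙) • 𝟙bᵀ`.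
-/

open Matrix

namespace Matrix

variable {n K : Type*} [Fintype n] [DecidableEq n] [CommRing K]

theorem det_sub_vecMulVec {A : Matrix n n K} (hA : IsUnit A) (u v : n → K) :
    (A - vecMulVec u v).det = A.det * (1 - v ⬝ᵥ (A⁻¹ *ᵥ u)) := by
  rw [sub_eq_add_neg, ← neg_vecMulVec, vecMulVec_eq Unit,
    det_add_replicateCol_mul_replicateRow ((isUnit_iff_isUnit_det A).mp hA), Matrix.mul_assoc,
    ← replicateCol_mulVec, replicateRow_mul_replicateCol, det_unique (n := Unit)]
  simp [sub_eq_add_neg, mulVec_neg]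

omit [DecidableEq n] in
theorem vecMulVec_mul_mul_vecMulVec (M : Matrix n n K) (u v : n → K) :
    vecMulVec u v * M * vecMulVec u v = (v ⬝ᵥ (M *ᵥ u)) • vecMulVec u v := by
  rw [Matrix.mul_assoc, mul_vecMulVec, vecMulVec_mul_vecMulVec, vecMulVec_smul]

theorem smul_mul_inv_one_sub_smul {O : Matrix n n K} {z : K} (hA : IsUnit (1 - z • O)) :
    z • (O * (1 - z • O)⁻¹) = (1 - z • O)⁻¹ - 1 := by
  have hAdet := (isUnit_iff_isUnit_det _).mp hA
  rw [← Matrix.smul_mul, ← sub_sub_cancel 1 (z • O), Matrix.sub_mul, Matrix.one_mul,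
    sub_sub_cancel, mul_nonsing_inv _ hAdet]

theorem one_sub_smul_mul_mul_inv {O : Matrix n n K} {z : K} (hA : IsUnit (1 - z • O)) :
    (1 - z • O) * (O * (1 - z • O)⁻¹) = O := by
  have hcomm : (1 - z • O) * O = O * (1 - z • O) := by
    simp only [Matrix.sub_mul, Matrix.mul_sub, Matrix.one_mul, Matrix.mul_one, Matrix.smul_mul,
      Matrix.mul_smul]
  rw [← Matrix.mul_assoc, hcomm, Matrix.mul_assoc,
    mul_nonsing_inv _ ((isUnit_iff_isUnit_det _).mp hA), Matrix.mul_one]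

omit [Fintype n] in
theorem one_sub_smul_add_smul_vecMulVec (O : Matrix n n K) (z c : K) (u v : n → K) :
    1 - z • (O + c • vecMulVec u v) = (1 - z • O) - vecMulVec ((z * c) • u) v := by
  rw [smul_add, smul_vecMulVec, smul_smul, ← sub_sub]

theorem isUnit_one_sub_smul_add_smul_vecMulVec {O : Matrix n n K} {z : K}
    (hA : IsUnit (1 - z • O)) (u v : n → K) {c : K}
    (h : IsUnit (1 - z * c * (v ⬝ᵥ ((1 - z • O)⁻¹ *ᵥ u)))) :
    IsUnit (1 - z • (O + c • vecMulVec u v)) := by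
  rw [isUnit_iff_isUnit_det, one_sub_smul_add_smul_vecMulVec, det_sub_vecMulVec hA, mulVec_smul,
    dotProduct_smul, smul_eq_mul]
  exact ((isUnit_iff_isUnit_det _).mp hA).mul h

theorem one_sub_smul_add_smul_vecMulVec_mul {O : Matrix n n K} {z : K}
    (hA : IsUnit (1 - z • O)) (u v : n → K) {c e : K}
    (he : e * (1 - z * c * (v ⬝ᵥ ((1 - z • O)⁻¹ *ᵥ u))) = c) :
    (1 - z • (O + c • vecMulVec u v)) *
        (O * (1 - z • O)⁻¹ + e • ((1 - z • O)⁻¹ * vecMulVec u v * (1 - z • O)⁻¹)) =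
      O + c • vecMulVec u v := by
  set A := 1 - z • O
  set V := vecMulVec u v
  set α := v ⬝ᵥ (A⁻¹ *ᵥ u)
  have hVA : (z * c) • (V * (O * A⁻¹)) = c • (V * A⁻¹) - c • V := by
    rw [mul_comm, ← smul_smul, ← Matrix.mul_smul, smul_mul_inv_one_sub_smul hA, Matrix.mul_sub,
      Matrix.mul_one, smul_sub]
  have hAVA : A * (A⁻¹ * V * A⁻¹) = V * A⁻¹ := by
    rw [Matrix.mul_assoc, mul_nonsing_inv_cancel_left _ _ ((isUnit_iff_isUnit_det _).mp hA)]
  have hVAVA : V * (A⁻¹ * V * A⁻¹) = α • (V * A⁻¹) := by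
    rw [← Matrix.mul_assoc, ← Matrix.mul_assoc, vecMulVec_mul_mul_vecMulVec, Matrix.smul_mul]
  rw [one_sub_smul_add_smul_vecMulVec, smul_vecMulVec, Matrix.sub_mul, Matrix.mul_add,
    Matrix.mul_add, Matrix.mul_smul, Matrix.smul_mul, Matrix.smul_mul, Matrix.mul_smul,
    one_sub_smul_mul_mul_inv hA, hAVA, hVAVA, hVA]
  -- what remains is `(e * (1 - z * c * α) - c) • (V * A⁻¹) = 0`
  match_scalars
  · ring
  · linear_combination he
  · ring

end Matrix

theorem runge_kutta_symbol_resolvent_formula_general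
    (s : ℕ)
    (𝒪 : Matrix (Fin s) (Fin s) ℂ) (b : Fin s → ℂ) (z ζ : ℂ) (hζ : ζ ≠ 1)
    (hz : IsUnit (1 - z • 𝒪))
    (hR : (1 + z * (b ⬝ᵥ ((1 - z • 𝒪)⁻¹ *ᵥ fun _ => 1))) * ζ ≠ 1) :
    IsUnit (1 - z • (𝒪 + (ζ / (1 - ζ)) • vecMulVec (fun _ => 1) b)) ∧
      (1 - z • (𝒪 + (ζ / (1 - ζ)) • vecMulVec (fun _ => 1) b))⁻¹
          * (𝒪 + (ζ / (1 - ζ)) • vecMulVec (fun _ => 1) b)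
        = 𝒪 * (1 - z • 𝒪)⁻¹
          + (ζ / (1 - (1 + z * (b ⬝ᵥ ((1 - z • 𝒪)⁻¹ *ᵥ fun _ => 1))) * ζ)) •
            ((1 - z • 𝒪)⁻¹ * vecMulVec (fun _ => 1) b * (1 - z • 𝒪)⁻¹) := by
  set α := b ⬝ᵥ ((1 - z • 𝒪)⁻¹ *ᵥ fun _ => 1)
  have hζ' : 1 - ζ ≠ 0 := sub_ne_zero.mpr hζ.symm
  have hR' : 1 - (1 + z * α) * ζ ≠ 0 := sub_ne_zero.mpr hR.symm
  have hd : 1 - z * (ζ / (1 - ζ)) * α = (1 - (1 + z * α) * ζ) / (1 - ζ) := by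
    field_simp
    ring
  have hT := isUnit_one_sub_smul_add_smul_vecMulVec hz (fun _ => 1) b
    (hd ▸ div_ne_zero hR' hζ').isUnit
  refine ⟨hT, ?_⟩
  obtain ⟨_⟩ := hT.nonempty_invertible
  rw [inv_mul_eq_iff_eq_mul_of_invertible]
  refine (one_sub_smul_add_smul_vecMulVec_mul hz _ _ ?_).symm
  rw [hd, div_mul_div_cancel₀ hR']

/-- The resolvent formula (5.2) for the matrix symbol of a Runge–Kutta method
(Lubich–Ostermann, Lemma 2.4): with T = 𝒪 + (ζ/(1−ζ))𝟙bᵀ one has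
(I − zT)⁻¹ T = 𝒪(I − z𝒪)⁻¹ + (ζ/(1 − R(z)ζ)) (I − z𝒪)⁻¹ 𝟙bᵀ (I − z𝒪)⁻¹. -/
theorem runge_kutta_symbol_resolvent_formula
    (s : ℕ) (hs : 1 ≤ s)
    (𝒪 : Matrix (Fin s) (Fin s) ℂ) (b : Fin s → ℂ) (z ζ : ℂ) (hζ : ζ ≠ 1)
    (hz : IsUnit (1 - z • 𝒪))
    (hR : (1 + z * (b ⬝ᵥ ((1 - z • 𝒪)⁻¹ *ᵥ fun _ => 1))) * ζ ≠ 1) :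
    IsUnit (1 - z • (𝒪 + (ζ / (1 - ζ)) • vecMulVec (fun _ => 1) b)) ∧
      (1 - z • (𝒪 + (ζ / (1 - ζ)) • vecMulVec (fun _ => 1) b))⁻¹
          * (𝒪 + (ζ / (1 - ζ)) • vecMulVec (fun _ => 1) b)
        = 𝒪 * (1 - z • 𝒪)⁻¹
          + (ζ / (1 - (1 + z * (b ⬝ᵥ ((1 - z • 𝒪)⁻¹ *ᵥ fun _ => 1))) * ζ)) •
            ((1 - z • 𝒪)⁻¹ * vecMulVec (fun _ => 1) b * (1 - z • 𝒪)⁻¹) :=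
  runge_kutta_symbol_resolvent_formula_general s 𝒪 b z ζ hζ hz hR
end

section
/- Let s ≥ 1, let 𝒪 be an invertible complex s×s matrix, b ∈ ℂ^s, 𝟙 = (1,…,1)ᵀ ∈ ℂ^s, and let ζ ∈ ℂ with ζ ≠ 1 be such that the matrix T = 𝒪 + (ζ/(1−ζ))·𝟙bᵀ is invertible, and set Δ(ζ) = T^{-1}. Then every z in the spectrum of Δ(ζ) satisfies: either z is in the spectrum of 𝒪^{-1}, or the matrix I − z𝒪 is invertible and R(z)ζ = 1, where R(z) = 1 + z·bᵀ(I − z𝒪)^{-1}𝟙. -/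
/-!
For invertible `a`, `z ∈ σ(a⁻¹)` iff `1 - z • a` is not invertible. With
`T = 𝒪 + (ζ / (1 - ζ)) 𝟙bᵀ`, the matrix `1 - z • T` is the rank-one perturbation
`(1 - z • 𝒪) - z (ζ / (1 - ζ)) 𝟙bᵀ`, so when `1 - z • 𝒪` is invertible the matrix determinant
lemma turns the singularity of `1 - z • T` into the scalar equation
`1 - z (ζ / (1 - ζ)) bᵀ(1 - z𝒪)⁻¹𝟙 = 0`, which rearranges to `R(z) ζ = 1`.
-/

open Matrix

theorem mem_spectrum_ringInverse_iff {R A : Type*} [CommSemiring R] [Ring A] [Algebra R A]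
    {a : A} (ha : IsUnit a) (z : R) :
    z ∈ spectrum R (Ring.inverse a) ↔ ¬IsUnit (1 - z • a) := by
  obtain ⟨u, rfl⟩ := ha
  have hfactor : algebraMap R A z - ↑u⁻¹ = ↑u⁻¹ * -(1 - z • (u : A)) := by
    rw [mul_neg, mul_sub, mul_smul_comm, Units.inv_mul, mul_one, Algebra.algebraMap_eq_smul_one]
    abel
  rw [Ring.inverse_unit, spectrum.mem_iff, hfactor, Units.isUnit_units_mul, IsUnit.neg_iff]

namespace Matrix

variable {n α : Type*} [Fintype n] [DecidableEq n] [CommRing α]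

theorem det_add_vecMulVec {A : Matrix n n α} (hA : IsUnit A.det) (u v : n → α) :
    (A + vecMulVec u v).det = A.det * (1 + v ⬝ᵥ (A⁻¹ *ᵥ u)) := by
  have hfactor : A + vecMulVec u v = A * (1 + vecMulVec (A⁻¹ *ᵥ u) v) := by
    rw [Matrix.mul_add, Matrix.mul_one, mul_vecMulVec, mulVec_mulVec, mul_nonsing_inv A hA,
      one_mulVec]
  rw [hfactor, det_mul, vecMulVec_eq Unit, det_one_add_replicateCol_mul_replicateRow]

theorem isUnit_add_vecMulVec_iff {A : Matrix n n α} (hA : IsUnit A) (u v : n → α) :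
    IsUnit (A + vecMulVec u v) ↔ IsUnit (1 + v ⬝ᵥ (A⁻¹ *ᵥ u)) := by
  rw [isUnit_iff_isUnit_det] at hA ⊢
  rw [det_add_vecMulVec hA, IsUnit.mul_iff, and_iff_right hA]

end Matrix

theorem one_add_mul_mul_eq_one_of_one_sub_mul_div_eq_zero {K : Type*} [Field K] {z ζ r : K}
    (h : 1 - z * (ζ / (1 - ζ)) * r = 0) : (1 + z * r) * ζ = 1 := by
  have hζ : 1 - ζ ≠ 0 := by
    rintro h0
    simp [h0] at h -- `ζ / 0 = 0`, so `h` reads `1 = 0`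
  field_simp at h
  linear_combination -h

theorem runge_kutta_symbol_spectrum_inclusion_general
    (s : ℕ)
    (𝒪 : Matrix (Fin s) (Fin s) ℂ) (b : Fin s → ℂ) (h𝒪 : IsUnit 𝒪)
    (ζ : ℂ)
    (hT : IsUnit (𝒪 + (ζ / (1 - ζ)) • vecMulVec (fun _ => 1) b))
    (z : ℂ)
    (hz : z ∈ spectrum ℂ ((𝒪 + (ζ / (1 - ζ)) • vecMulVec (fun _ => 1) b)⁻¹)) :
    z ∈ spectrum ℂ 𝒪⁻¹ ∨
      (IsUnit (1 - z • 𝒪) ∧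
        (1 + z * (b ⬝ᵥ ((1 - z • 𝒪)⁻¹ *ᵥ fun _ => 1))) * ζ = 1) := by
  rw [nonsing_inv_eq_ringInverse, mem_spectrum_ringInverse_iff hT] at hz
  rw [nonsing_inv_eq_ringInverse 𝒪, mem_spectrum_ringInverse_iff h𝒪]
  refine (em' _).imp id fun h ↦ ⟨h, ?_⟩
  have hrankOne : 1 - z • (𝒪 + (ζ / (1 - ζ)) • vecMulVec (fun _ => 1) b) =
      (1 - z • 𝒪) + vecMulVec (-(z * (ζ / (1 - ζ))) • fun _ => 1) b := by
    rw [smul_vecMulVec, smul_add, smul_smul, neg_smul]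
    abel
  rw [hrankOne, isUnit_add_vecMulVec_iff h, isUnit_iff_ne_zero, not_not,
    mulVec_smul, dotProduct_smul, smul_eq_mul, neg_mul, ← sub_eq_add_neg] at hz
  exact one_add_mul_mul_eq_one_of_one_sub_mul_div_eq_zero hz

/-- The spectrum inclusion σ(Δ(ζ)) ⊆ σ(𝒪⁻¹) ∪ {z : R(z)ζ = 1} for the matrix
symbol Δ(ζ) = (𝒪 + (ζ/(1−ζ))𝟙bᵀ)⁻¹ of a Runge–Kutta method, used in the proof
of Theorem 5.3 of Kovács–Li–Lubich. -/
theorem runge_kutta_symbol_spectrum_inclusion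
    (s : ℕ) (hs : 1 ≤ s)
    (𝒪 : Matrix (Fin s) (Fin s) ℂ) (b : Fin s → ℂ) (h𝒪 : IsUnit 𝒪)
    (ζ : ℂ) (hζ : ζ ≠ 1)
    (hT : IsUnit (𝒪 + (ζ / (1 - ζ)) • vecMulVec (fun _ => 1) b))
    (z : ℂ)
    (hz : z ∈ spectrum ℂ ((𝒪 + (ζ / (1 - ζ)) • vecMulVec (fun _ => 1) b)⁻¹)) :
    z ∈ spectrum ℂ 𝒪⁻¹ ∨
      (IsUnit (1 - z • 𝒪) ∧
        (1 + z * (b ⬝ᵥ ((1 - z • 𝒪)⁻¹ *ᵥ fun _ => 1))) * ζ = 1) :=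
  runge_kutta_symbol_spectrum_inclusion_general s 𝒪 b h𝒪 ζ hT z hz
end

section
/- Let X be a vector space over ℝ, s ≥ 1, let 𝒪 = (a_{ij}) be an invertible real s×s matrix, b = (b_i) ∈ ℝ^s, 𝟙 = (1,…,1)ᵀ ∈ ℝ^s, and set w = (bᵀ𝒪^{-1})ᵀ ∈ ℝ^s and R(∞) = 1 − bᵀ𝒪^{-1}𝟙. Let τ ≠ 0 and let u : ℕ → X and U, V : ℕ → (Fin s → X) satisfy u_0 = 0 and, for all n ≥ 0: U_{ni} = u_n + τ ∑_{j=1}^s a_{ij} V_{nj} for 1 ≤ i ≤ s, and u_{n+1} = u_n + τ ∑_{i=1}^s b_i V_{ni}. Then for all n ≥ 0, u_{n+1} = ∑_{k=0}^n R(∞)^{n−k} ∑_{i=1}^s w_i U_{ki}. -/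
open Matrix

/-!
Applying the weights `w = bᵀ𝒪⁻¹` to the stage equations `U_n = u_n 𝟙 + τ 𝒪 V_n` gives
`wᵀU_n = (wᵀ𝟙) u_n + τ bᵀV_n`, so the step equation becomes the scalar recurrence
`u_{n+1} = wᵀU_n + R(∞) u_n`. Started from `u_0 = 0`, this unrolls to the discrete convolution.
-/

theorem succ_eq_sum_pow_smul_of_succ_eq_add_smul {R M : Type*} [Semiring R] [AddCommMonoid M]
    [Module R M] {x f : ℕ → M} {r : R} (h0 : x 0 = 0) (hx : ∀ n, x (n + 1) = f n + r • x n) :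
    ∀ n, x (n + 1) = ∑ k ∈ Finset.range (n + 1), r ^ (n - k) • f k
  | 0 => by simp [hx 0, h0]
  | n + 1 => by
    rw [hx, succ_eq_sum_pow_smul_of_succ_eq_add_smul h0 hx n, Finset.sum_range_succ _ (n + 1),
      Finset.smul_sum, Nat.sub_self, pow_zero, one_smul, add_comm]
    congr 1
    refine Finset.sum_congr rfl fun k hk => ?_
    rw [smul_smul, ← pow_succ', Nat.sub_add_comm (Finset.mem_range_succ_iff.mp hk)]

theorem sum_smul_add_sum_smul {ι R M : Type*} [Fintype ι] [CommSemiring R] [AddCommMonoid M]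
    [Module R M] (w : ι → R) (A : Matrix ι ι R) (x : M) (y : ι → M) :
    ∑ i, w i • (x + ∑ j, A i j • y j) = (∑ i, w i) • x + ∑ j, (w ᵥ* A) j • y j := by
  simp only [smul_add, Finset.sum_add_distrib, Finset.sum_smul, Finset.smul_sum, smul_smul,
    vecMul, dotProduct]
  rw [Finset.sum_comm (s := Finset.univ) (t := Finset.univ) (f := fun i j => (w i * A i j) • y j)]

theorem runge_kutta_step_eq_stage_combination_add_smul {ι K X : Type*} [Fintype ι]
    [DecidableEq ι] [CommRing K] [AddCommGroup X] [Module K X]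
    {𝒪 : Matrix ι ι K} (h𝒪 : IsUnit 𝒪) (b : ι → K) (τ : K) (U V : ι → X) (u u' : X)
    (hU : ∀ i, U i = u + τ • ∑ j, 𝒪 i j • V j) (hstep : u' = u + τ • ∑ i, b i • V i) :
    u' = ∑ i, (b ᵥ* 𝒪⁻¹) i • U i + (1 - b ⬝ᵥ (𝒪⁻¹ *ᵥ fun _ => 1)) • u := by
  have hw : b ᵥ* 𝒪⁻¹ ᵥ* 𝒪 = b := by
    rw [vecMul_vecMul, nonsing_inv_mul _ ((isUnit_iff_isUnit_det 𝒪).mp h𝒪), vecMul_one]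
  have hU' : ∀ i, U i = u + ∑ j, 𝒪 i j • τ • V j := fun i => by
    simp only [hU, Finset.smul_sum, smul_comm τ]
  simp only [hU', sum_smul_add_sum_smul, hw, dotProduct_mulVec, ← Pi.one_def, dotProduct_one,
    hstep, Finset.smul_sum, smul_comm τ, sub_smul, one_smul]
  abel

theorem runge_kutta_step_from_stages_general
    {X : Type*} [AddCommGroup X] [Module ℝ X]
    (s : ℕ)
    (𝒪 : Matrix (Fin s) (Fin s) ℝ) (b : Fin s → ℝ) (h𝒪 : IsUnit 𝒪)
    (τ : ℝ)
    (u : ℕ → X) (U V : ℕ → Fin s → X)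
    (hu0 : u 0 = 0)
    (hU : ∀ n i, U n i = u n + τ • ∑ j, 𝒪 i j • V n j)
    (hstep : ∀ n, u (n + 1) = u n + τ • ∑ i, b i • V n i) :
    ∀ n, u (n + 1) = ∑ k ∈ Finset.range (n + 1), ∑ i,
      ((1 - b ⬝ᵥ (𝒪⁻¹ *ᵥ fun _ => 1)) ^ (n - k) * (b ᵥ* 𝒪⁻¹) i) • U k i := by
  intro n
  rw [succ_eq_sum_pow_smul_of_succ_eq_add_smul hu0 (fun n =>
    runge_kutta_step_eq_stage_combination_add_smul h𝒪 b τ (U n) (V n) _ _ (hU n) (hstep n)) n]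
  simp only [Finset.smul_sum, smul_smul]

/-- Formula (5.5) of Kovács–Li–Lubich (Lubich–Ostermann, Lemma 3.1): for a
Runge–Kutta method with invertible coefficient matrix 𝒪 started from u₀ = 0,
the step solution is u_{n+1} = bᵀ𝒪⁻¹ ∑_{k=0}^n R(∞)^{n−k} U_k, where
R(∞) = 1 − bᵀ𝒪⁻¹𝟙. -/
theorem runge_kutta_step_from_stages
    {X : Type*} [AddCommGroup X] [Module ℝ X]
    (s : ℕ) (hs : 1 ≤ s)
    (𝒪 : Matrix (Fin s) (Fin s) ℝ) (b : Fin s → ℝ) (h𝒪 : IsUnit 𝒪)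
    (τ : ℝ) (hτ : τ ≠ 0)
    (u : ℕ → X) (U V : ℕ → Fin s → X)
    (hu0 : u 0 = 0)
    (hU : ∀ n i, U n i = u n + τ • ∑ j, 𝒪 i j • V n j)
    (hstep : ∀ n, u (n + 1) = u n + τ • ∑ i, b i • V n i) :
    ∀ n, u (n + 1) = ∑ k ∈ Finset.range (n + 1), ∑ i,
      ((1 - b ⬝ᵥ (𝒪⁻¹ *ᵥ fun _ => 1)) ^ (n - k) * (b ᵥ* 𝒪⁻¹) i) • U k i :=
  runge_kutta_step_from_stages_general s 𝒪 b h𝒪 τ u U V hu0 hU hstep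
end

section
/- Let X be a complex Banach space and let 𝒯 be a set of bounded linear operators on X that is R-bounded with R-bound C. Then the absolute convex hull of 𝒯, i.e. the set of all operators of the form ∑_{i=1}^m c_i T_i with m ≥ 1, T_1,…,T_m ∈ 𝒯 and c_1,…,c_m ∈ ℂ satisfying ∑_{i=1}^m |c_i| ≤ 1, is R-bounded with R-bound at most 2C. -/
/-- A set 𝒯 of bounded operators on a complex Banach space is R-bounded with
R-bound C if the randomized square function estimate holds, with signs
averaged over all choices ε ∈ {−1,1}^l. -/
def RBounded {X : Type*} [NormedAddCommGroup X] [NormedSpace ℂ X]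
    (𝒯 : Set (X →L[ℂ] X)) (C : ℝ) : Prop :=
  ∀ l : ℕ, 1 ≤ l → ∀ (T : Fin l → X →L[ℂ] X) (v : Fin l → X),
    (∀ j, T j ∈ 𝒯) →
    (2 : ℝ)⁻¹ ^ l *
        ∑ ε : Fin l → Bool,
          ‖∑ j, (if ε j then (1 : ℝ) else -1) • (T j) (v j)‖ ^ 2
      ≤ C ^ 2 * ((2 : ℝ)⁻¹ ^ l *
        ∑ ε : Fin l → Bool,
          ‖∑ j, (if ε j then (1 : ℝ) else -1) • v j‖ ^ 2)

/-!
Rewritten with the `ℓ²` vector `R w` of all Rademacher sums of `w`, the R-bound inequality says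
`‖R (T v)‖ ≤ |C| ‖R v‖`, and the left side is a convex function of the operator family `T`.
Changing the sign of one `T j` only permutes the sign patterns, so the bound extends to families
from `𝒯 ∪ -𝒯`, and then by convexity to families from its convex hull, the real absolutely
convex hull of `𝒯`. A complex combination `∑ c_i T_i` with `∑ ‖c_i‖ ≤ 1` is `A + i B` with
`A`, `B` in that real hull (take real and imaginary parts of the `c_i`), which costs the factor 2.
-/

open Finset Set

theorem ConvexOn.le_of_mem_pi_convexHull {𝕜 ι β : Type*} {E : ι → Type*} [Finite ι] [Field 𝕜]
    [LinearOrder 𝕜] [IsStrictOrderedRing 𝕜] [∀ i, AddCommGroup (E i)] [∀ i, Module 𝕜 (E i)]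
    [AddCommMonoid β] [PartialOrder β] [IsOrderedAddMonoid β] [Module 𝕜 β] [PosSMulMono 𝕜 β]
    {f : (∀ i, E i) → β} (hf : ConvexOn 𝕜 univ f) {A : ∀ i, Set (E i)} {M : β}
    (hA : ∀ x ∈ univ.pi A, f x ≤ M) {x : ∀ i, E i}
    (hx : x ∈ univ.pi fun i => convexHull 𝕜 (A i)) : f x ≤ M := by
  rw [← convexHull_pi] at hx
  exact (convexHull_min (t := {y | y ∈ univ ∧ f y ≤ M}) (fun y hy => ⟨mem_univ y, hA y hy⟩)
    (hf.convex_le M) hx).2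

theorem AbsConvex.sum_smul_mem {E ι : Type*} [AddCommGroup E] [Module ℝ E] {K : Set E}
    (hK : AbsConvex ℝ K) (hK₀ : K.Nonempty) {t : Finset ι} {a : ι → ℝ} {x : ι → E}
    (ha : ∑ i ∈ t, |a i| ≤ 1) (hx : ∀ i ∈ t, x i ∈ K) : ∑ i ∈ t, a i • x i ∈ K := by
  set σ := ∑ i ∈ t, |a i|
  rcases (sum_nonneg fun i _ => abs_nonneg (a i) : 0 ≤ σ).eq_or_lt with hσ | hσ
  · have ha₀ : ∀ i ∈ t, a i = 0 := fun i hi =>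
      abs_eq_zero.mp ((sum_eq_zero_iff_of_nonneg fun i _ => abs_nonneg (a i)).mp hσ.symm i hi)
    rw [sum_eq_zero fun i hi => by rw [ha₀ i hi, zero_smul]]
    exact hK.1.zero_mem hK₀
  have hsum : ∑ i ∈ t, a i • x i = ∑ i ∈ t, (|a i| / σ) • ((σ * SignType.sign (a i)) • x i) := by
    refine sum_congr rfl fun i _ => ?_
    rw [smul_smul, ← mul_assoc, div_mul_cancel₀ _ hσ.ne', abs_mul_sign]
  rw [hsum]
  refine hK.2.sum_mem (fun i _ => by positivity) (by rw [← sum_div, div_self hσ.ne']) fun i hi => ?_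
  refine hK.1.smul_mem ?_ (hx i hi)
  rw [norm_mul, Real.norm_of_nonneg hσ.le]
  exact mul_le_one₀ ha (norm_nonneg _) (by rcases (SignType.sign (a i)) with _ | _ | _ <;> simp)

theorem exists_eq_add_I_smul_of_sum_norm_le_one {E ι : Type*} [AddCommGroup E] [Module ℂ E]
    {s : Set E} (hs : s.Nonempty) {t : Finset ι} {c : ι → ℂ} {x : ι → E}
    (hc : ∑ i ∈ t, ‖c i‖ ≤ 1) (hx : ∀ i ∈ t, x i ∈ s) :
    ∃ A ∈ absConvexHull ℝ s, ∃ B ∈ absConvexHull ℝ s, ∑ i ∈ t, c i • x i = A + Complex.I • B := by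
  have mem {a : ι → ℝ} (ha : ∀ i, |a i| ≤ ‖c i‖) : ∑ i ∈ t, a i • x i ∈ absConvexHull ℝ s :=
    absConvex_absConvexHull.sum_smul_mem (hs.mono subset_absConvexHull)
      ((sum_le_sum fun i _ => ha i).trans hc) fun i hi => subset_absConvexHull (hx i hi)
  refine ⟨_, mem fun i => Complex.abs_re_le_norm (c i),
    _, mem fun i => Complex.abs_im_le_norm (c i), ?_⟩
  rw [smul_sum, ← sum_add_distrib]
  refine sum_congr rfl fun i _ => ?_
  rw [← Complex.coe_smul, ← Complex.coe_smul, smul_smul, ← add_smul, mul_comm, Complex.re_add_im]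

section Rademacher

variable {ι X : Type*} [Fintype ι] [DecidableEq ι] [NormedAddCommGroup X] [NormedSpace ℂ X]

/-- The vector of all Rademacher sums `∑ j, ε j • w j`, indexed by the sign patterns `ε`; its
squared `ℓ²` norm is `2 ^ card ι` times their mean square. -/
noncomputable def rademacherSums : (ι → X) →ₗ[ℂ] PiLp 2 (fun _ : ι → Bool => X) where
  toFun w := WithLp.toLp 2 fun ε => ∑ j, (if ε j then (1 : ℝ) else -1) • w j
  map_add' w w' := by
    ext ε
    simp [smul_add, sum_add_distrib]
  map_smul' c w := by
    ext ε
    simp [smul_sum]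

theorem norm_rademacherSums_sq (w : ι → X) :
    ‖rademacherSums w‖ ^ 2 = ∑ ε : ι → Bool, ‖∑ j, (if ε j then (1 : ℝ) else -1) • w j‖ ^ 2 :=
  PiLp.norm_sq_eq_of_L2 _ _

theorem norm_rademacherSums_flip (b : ι → Bool) (w : ι → X) :
    ‖rademacherSums fun j => if b j then w j else -w j‖ = ‖rademacherSums w‖ := by
  let e : Equiv.Perm (ι → Bool) := Function.Involutive.toPerm (fun ε j => ε j == b j)
    fun ε => funext fun j => by cases h : ε j <;> cases b j <;> simp [h]
  rw [← (LinearIsometryEquiv.piLpCongrLeft 2 ℝ X e).norm_map]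
  congr 1
  ext ε
  simp only [rademacherSums, LinearMap.coe_mk, AddHom.coe_mk,
    LinearIsometryEquiv.piLpCongrLeft_apply, Equiv.piCongrLeft'_apply,
    show e.symm ε = fun j => ε j == b j from rfl]
  refine sum_congr rfl fun j _ => ?_
  cases ε j <;> cases b j <;> simp

theorem convexOn_norm_rademacherSums_apply (v : ι → X) :
    ConvexOn ℝ univ fun U : ι → X →L[ℂ] X => ‖rademacherSums fun j => U j (v j)‖ := by
  let L : (ι → X →L[ℂ] X) →ₗ[ℝ] PiLp 2 (fun _ : ι → Bool => X) :=
    (rademacherSums.restrictScalars ℝ) ∘ₗ LinearMap.pi fun j =>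
      ((ContinuousLinearMap.apply ℂ X (v j)).toLinearMap ∘ₗ LinearMap.proj j).restrictScalars ℝ
  exact (convexOn_norm convex_univ).comp_linearMap L

theorem norm_rademacherSums_le_of_mem_absConvexHull {𝒯 : Set (X →L[ℂ] X)} {C : ℝ} {v : ι → X}
    (h𝒯 : ∀ T : ι → X →L[ℂ] X, (∀ j, T j ∈ 𝒯) →
      ‖rademacherSums fun j => T j (v j)‖ ≤ C * ‖rademacherSums v‖)
    {U : ι → X →L[ℂ] X} (hU : ∀ j, U j ∈ absConvexHull ℝ 𝒯) :
    ‖rademacherSums fun j => U j (v j)‖ ≤ C * ‖rademacherSums v‖ := by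
  simp_rw [← convexHull_union_neg_eq_absConvexHull] at hU
  refine (convexOn_norm_rademacherSums_apply v).le_of_mem_pi_convexHull (fun U hU => ?_)
    fun j _ => hU j
  have hsign (j : ι) : ∃ (b : Bool) (T : X →L[ℂ] X), T ∈ 𝒯 ∧ U j = if b then T else -T :=
    (hU j trivial).elim (fun h => ⟨true, _, h, rfl⟩) fun h =>
      ⟨false, -U j, h, by simp only [Bool.false_eq_true, if_false, neg_neg]⟩
  choose b T hT hUT using hsign
  calc ‖rademacherSums fun j => U j (v j)‖
      = ‖rademacherSums fun j => if b j then T j (v j) else -T j (v j)‖ := by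
        congr 2
        funext j
        rw [hUT j]
        cases b j <;> simp
    _ = ‖rademacherSums fun j => T j (v j)‖ := norm_rademacherSums_flip b _
    _ ≤ C * ‖rademacherSums v‖ := h𝒯 T hT

end Rademacher

theorem rBounded_iff_norm_rademacherSums_le {X : Type*} [NormedAddCommGroup X] [NormedSpace ℂ X]
    {𝒯 : Set (X →L[ℂ] X)} {C : ℝ} :
    RBounded 𝒯 C ↔ ∀ l : ℕ, 1 ≤ l → ∀ (T : Fin l → X →L[ℂ] X) (v : Fin l → X), (∀ j, T j ∈ 𝒯) →
      ‖rademacherSums fun j => T j (v j)‖ ≤ |C| * ‖rademacherSums v‖ := by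
  simp only [RBounded, ← norm_rademacherSums_sq]
  refine forall₂_congr fun l _ => forall₃_congr fun T v _ => ?_
  rw [mul_left_comm, mul_le_mul_iff_right₀ (by positivity), ← sq_abs C, ← mul_pow,
    sq_le_sq₀ (norm_nonneg _) (by positivity)]

theorem rBounded_absConvexHull_general
    {X : Type*} [NormedAddCommGroup X] [NormedSpace ℂ X]
    (𝒯 : Set (X →L[ℂ] X)) (C : ℝ)
    (h𝒯 : RBounded 𝒯 C) :
    RBounded
      {S | ∃ (m : ℕ), 1 ≤ m ∧ ∃ (c : Fin m → ℂ) (T : Fin m → X →L[ℂ] X),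
        (∀ i, T i ∈ 𝒯) ∧ (∑ i, ‖c i‖) ≤ 1 ∧ S = ∑ i, c i • T i}
      (2 * C) := by
  rw [rBounded_iff_norm_rademacherSums_le] at h𝒯 ⊢
  intro l hl S v hS
  have hull {U : Fin l → X →L[ℂ] X} (hU : ∀ j, U j ∈ absConvexHull ℝ 𝒯) :
      ‖rademacherSums fun j => U j (v j)‖ ≤ |C| * ‖rademacherSums v‖ :=
    norm_rademacherSums_le_of_mem_absConvexHull (h𝒯 l hl · v) hU
  choose m hm c T hT hc hS using hS
  choose A hA B hB hAB using fun j => exists_eq_add_I_smul_of_sum_norm_le_one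
    ⟨T j ⟨0, hm j⟩, hT j _⟩ (hc j) fun i _ => hT j i
  calc ‖rademacherSums fun j => S j (v j)‖
      = ‖rademacherSums (fun j => A j (v j)) + Complex.I • rademacherSums fun j => B j (v j)‖ := by
        rw [← map_smul, ← map_add]
        congr
        funext j
        simp [hS, hAB]
    _ ≤ ‖rademacherSums fun j => A j (v j)‖ + ‖rademacherSums fun j => B j (v j)‖ := by
        refine (norm_add_le _ _).trans_eq ?_
        rw [norm_smul, Complex.norm_I, one_mul]
    _ ≤ |C| * ‖rademacherSums v‖ + |C| * ‖rademacherSums v‖ := add_le_add (hull hA) (hull hB)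
    _ = |2 * C| * ‖rademacherSums v‖ := by rw [abs_mul, abs_two]; ring

/-- The absolute convex hull of an R-bounded set of operators is R-bounded,
with R-bound at most doubled (Lemma 2.1 of Kovács–Li–Lubich, quoted from
Clément–de Pagter–Sukochev–Witvliet). -/
theorem rBounded_absConvexHull
    {X : Type*} [NormedAddCommGroup X] [NormedSpace ℂ X]
    (𝒯 : Set (X →L[ℂ] X)) (C : ℝ) (hC : 0 ≤ C)
    (h𝒯 : RBounded 𝒯 C) :
    RBounded
      {S | ∃ (m : ℕ), 1 ≤ m ∧ ∃ (c : Fin m → ℂ) (T : Fin m → X →L[ℂ] X),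
        (∀ i, T i ∈ 𝒯) ∧ (∑ i, ‖c i‖) ≤ 1 ∧ S = ∑ i, c i • T i}
      (2 * C) :=
  rBounded_absConvexHull_general 𝒯 C h𝒯
end
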